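/- arXiv:2510.15920 — 7 statements merged into one kernel-verified Lean document; each statement's English description precedes it below -/
import Mathlib

section
/- Let G : ℂ × ℝ → ℂ be such that for every real τ > 0: (i) G(z + 1, τ) = Γ(z/τ) · G(z, τ) for all z ∈ ℂ, and (ii) the modular relation G(z, τ) = (2π)^{z(τ−1)/(2τ)} · τ^{(z−z²)/(2τ) + z/2 − 1} · G(z/τ, 1/τ) holds for all z ∈ ℂ. Then for every real τ > 0 and every z ∈ ℂ, G(z + τ, τ) = (2π)^{(τ−1)/2} · τ^{−z + 1/2} · Γ(z) · G(z, τ). -/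
/-!
Apply the modular relation at `z + τ`. On the dual side the argument becomes `z / τ + 1`, so the
first functional equation for the parameter `1 / τ` produces the factor `Γ((z / τ) / (1 / τ)) = Γ(z)`.
The elementary factors of the modular relation at `z + τ` and at `z` differ by exactly
`(2π)^((τ - 1) / 2) · τ^(-z + 1 / 2)` (add the exponents), and the modular relation at `z` closes
the argument.
-/

open Complex

noncomputable section

def modularFactor (z : ℂ) (τ : ℝ) : ℂ :=
  ((2 * Real.pi : ℝ) : ℂ) ^ (z * ((τ : ℂ) - 1) / (2 * (τ : ℂ)))
    * ((τ : ℝ) : ℂ) ^ ((z - z ^ 2) / (2 * (τ : ℂ)) + z / 2 - 1)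

theorem modularFactor_add_self {τ : ℝ} (hτ : τ ≠ 0) (z : ℂ) :
    modularFactor (z + τ) τ = ((2 * Real.pi : ℝ) : ℂ) ^ (((τ : ℂ) - 1) / 2)
      * ((τ : ℝ) : ℂ) ^ (-z + 1 / 2) * modularFactor z τ := by
  have hτ' : (τ : ℂ) ≠ 0 := ofReal_ne_zero.mpr hτ
  have h2π : ((2 * Real.pi : ℝ) : ℂ) ≠ 0 := ofReal_ne_zero.mpr (by positivity)
  have hexp₁ : (z + τ) * ((τ : ℂ) - 1) / (2 * (τ : ℂ))
      = ((τ : ℂ) - 1) / 2 + z * ((τ : ℂ) - 1) / (2 * (τ : ℂ)) := by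
    field_simp; ring
  have hexp₂ : ((z + τ) - (z + τ) ^ 2) / (2 * (τ : ℂ)) + (z + τ) / 2 - 1
      = (-z + 1 / 2) + ((z - z ^ 2) / (2 * (τ : ℂ)) + z / 2 - 1) := by
    field_simp; ring
  rw [modularFactor, modularFactor, hexp₁, hexp₂, cpow_add _ _ h2π, cpow_add _ _ hτ']
  ring

end

/-- The two functional relations (7) and (8) of the double gamma function are related
by the modular transformation (10): if `G` satisfies the first functional equation and
the modular relation for every parameter `τ > 0`, then it satisfies the second
functional equation. -/
theorem double_gamma_second_from_modular (G : ℂ → ℝ → ℂ)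
    (h1 : ∀ τ : ℝ, 0 < τ → ∀ z : ℂ, G (z + 1) τ = Complex.Gamma (z / τ) * G z τ)
    (h2 : ∀ τ : ℝ, 0 < τ → ∀ z : ℂ,
      G z τ = ((2 * Real.pi : ℝ) : ℂ) ^ (z * ((τ : ℂ) - 1) / (2 * (τ : ℂ)))
        * ((τ : ℝ) : ℂ) ^ ((z - z ^ 2) / (2 * (τ : ℂ)) + z / 2 - 1) * G (z / τ) (1 / τ)) :
    ∀ τ : ℝ, 0 < τ → ∀ z : ℂ,
      G (z + τ) τ = ((2 * Real.pi : ℝ) : ℂ) ^ (((τ : ℂ) - 1) / 2)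
        * ((τ : ℝ) : ℂ) ^ (-z + 1 / 2) * Complex.Gamma z * G z τ := by
  intro τ hτ z
  have hτ' : (τ : ℂ) ≠ 0 := ofReal_ne_zero.mpr hτ.ne'
  have modular (w : ℂ) : G w τ = modularFactor w τ * G (w / τ) (1 / τ) := h2 τ hτ w
  have dual_shift : G (z / τ + 1) (1 / τ) = Complex.Gamma z * G (z / τ) (1 / τ) := by
    rw [h1 (1 / τ) (one_div_pos.mpr hτ)]
    congr 2
    push_cast
    field_simp
  calc G (z + τ) τ = modularFactor (z + τ) τ * G (z / τ + 1) (1 / τ) := by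
        rw [modular, div_add_same hτ']
    _ = ((2 * Real.pi : ℝ) : ℂ) ^ (((τ : ℂ) - 1) / 2) * ((τ : ℝ) : ℂ) ^ (-z + 1 / 2)
          * Complex.Gamma z * (modularFactor z τ * G (z / τ) (1 / τ)) := by
        rw [modularFactor_add_self hτ.ne', dual_shift]; ring
    _ = _ := by rw [← modular]
end

section
/- Let τ > 0 be real and let G : ℂ → ℂ satisfy the second double-gamma functional equation with parameter τ. Then for every x ∈ ℂ and every natural number k, Γ(1 + x) · G(1 + x) · G(1 + τ + x − k) = τ^k · Γ(1 + x − k) · G(1 + τ + x) · G(1 + x − k). (Equivalently, wherever the denominators are nonzero, Γ(1+x)/Γ(1+x−k) = τ^k · G(1+τ+x) · G(1+x−k) / (G(1+x) · G(1+τ+x−k)).) -/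
/-! Both sides reduce, through the functional equation at `1 + x` and at `1 + x - k`, to the same
product; they differ only in the powers `τ ^ (-(1 + x - k) + 1/2)` and `τ ^ (-(1 + x) + 1/2)`,
whose quotient is `τ ^ k`. -/

theorem mul_apply_mul_apply_sub_natCast_add_of_functional_eq {τ C a : ℂ} (hτ : τ ≠ 0)
    {F G : ℂ → ℂ} (hG : ∀ z, G (z + τ) = C * τ ^ (-z + a) * F z * G z) (w : ℂ) (k : ℕ) :
    F w * G w * G (w - k + τ) = τ ^ k * F (w - k) * G (w + τ) * G (w - k) := by
  have hpow : τ ^ (-(w - k) + a) = τ ^ k * τ ^ (-w + a) := by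
    rw [show -(w - k) + a = (k : ℂ) + (-w + a) by ring, Complex.cpow_add _ _ hτ,
      Complex.cpow_natCast]
  rw [hG, hG, hpow]
  ring

/-- The Gamma-quotient arising from the k-th derivative of a power function expressed
via double gamma values: if `G` satisfies the second double-gamma functional equation
with parameter `τ`, then for all `x : ℂ` and `k : ℕ`,
`Γ(1+x) G(1+x) G(1+τ+x-k) = τ^k Γ(1+x-k) G(1+τ+x) G(1+x-k)`. -/
theorem double_gamma_derivative_quotient (τ : ℝ) (hτ : 0 < τ) (G : ℂ → ℂ)
    (hG : ∀ z : ℂ, G (z + τ) = ((2 * Real.pi : ℝ) : ℂ) ^ (((τ : ℂ) - 1) / 2)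
      * ((τ : ℝ) : ℂ) ^ (-z + 1 / 2) * Complex.Gamma z * G z) :
    ∀ (x : ℂ) (k : ℕ),
      Complex.Gamma (1 + x) * G (1 + x) * G (1 + τ + x - k)
        = (τ : ℂ) ^ k * Complex.Gamma (1 + x - k) * G (1 + τ + x) * G (1 + x - k) := by
  intro x k
  have h := mul_apply_mul_apply_sub_natCast_add_of_functional_eq
    (Complex.ofReal_ne_zero.mpr hτ.ne') hG (1 + x) k
  rwa [sub_add_eq_add_sub, add_right_comm] at h
end

section
/- Let τ > 0 be real, let m, n be natural numbers, and set p = q = m + n. Let a_1,…,a_p ∈ ℂ, b_1,…,b_q ∈ ℂ and positive reals α_1,…,α_p, β_1,…,β_q satisfy: α_i = β_{m+i} for 1 ≤ i ≤ n; β_i = α_{n+i} for 1 ≤ i ≤ m; and suppose there exist m₀, n₀ with 1 ≤ m₀ ≤ m and 1 ≤ n₀ ≤ n such that a_i = b_{m+i} − 1 for 1 ≤ i ≤ n₀, a_i = b_{m+i} + 1 for n₀ < i ≤ n, b_i = a_{n+i} + 1 for 1 ≤ i ≤ m₀, and b_i = a_{n+i} − 1 for m₀ < i ≤ m. Let G :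 ℂ → ℂ satisfy the first double-gamma functional equation with parameter τ. Then for every s ∈ ℂ: ∏_{i=1}^{m} G(b_i + β_i s) · ∏_{i=1}^{n} G(1 + τ − a_i − α_i s) · ∏_{i=m₀+1}^{m} Γ((a_{n+i} − 1 + α_{n+i} s)/τ) · ∏_{i=n₀+1}^{n} Γ((τ − b_{m+i} − β_{m+i} s)/τ) = ∏_{i=m+1}^{q} G(1 + τ − b_i − β_i s) · ∏_{i=n+1}^{p} G(a_i + α_i s) · ∏_{i=1}^{m₀} Γ((b_i − 1 + β_i s)/τ) · ∏_{i=1}^{n₀} Γ((τ − a_i − α_i s)/τ). -/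
/-!
Each double-gamma factor on one side is paired with one on the other side whose argument differs
from it by exactly `1`. One application of `G (z + 1) = Γ (z / τ) G z` to each pair produces a
Gamma factor, and these Gamma factors are precisely the ones appearing on the opposite side.
-/

open Finset

def SatisfiesFirstDoubleGammaEq (τ : ℂ) (G : ℂ → ℂ) : Prop :=
  ∀ z : ℂ, G (z + 1) = Complex.Gamma (z / τ) * G z

namespace Finset

theorem prod_Icc_add_one_add {M : Type*} [CommMonoid M] (f : ℕ → M) (k l : ℕ) :
    ∏ i ∈ Icc (k + 1) (k + l), f i = ∏ i ∈ Icc 1 l, f (k + i) := by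
  rw [← map_add_left_Icc, prod_map]
  rfl

theorem prod_Icc_one_eq_mul_prod_Icc {M : Type*} [CommMonoid M] (f : ℕ → M) {k l : ℕ}
    (hkl : k ≤ l) :
    ∏ i ∈ Icc 1 l, f i = (∏ i ∈ Icc 1 k, f i) * ∏ i ∈ Icc (k + 1) l, f i := by
  simp only [Icc_add_one_left_eq_Ioc]
  exact (prod_Ioc_consecutive f k.zero_le hkl).symm

theorem prod_Icc_mul_prod_eq_of_exchange {M : Type*} [CommMonoid M] {k l : ℕ} (hkl : k ≤ l)
    {f f' g h : ℕ → M} (hlow : ∀ i ∈ Icc 1 k, f i = g i * f' i)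
    (hhigh : ∀ i ∈ Icc (k + 1) l, f' i = h i * f i) :
    (∏ i ∈ Icc 1 l, f i) * ∏ i ∈ Icc (k + 1) l, h i =
      (∏ i ∈ Icc 1 l, f' i) * ∏ i ∈ Icc 1 k, g i := by
  rw [prod_Icc_one_eq_mul_prod_Icc f hkl, prod_Icc_one_eq_mul_prod_Icc f' hkl,
    prod_congr rfl hlow, prod_congr rfl hhigh, prod_mul_distrib, prod_mul_distrib]
  ac_rfl

end Finset

namespace SatisfiesFirstDoubleGammaEq

variable {τ : ℂ} {G : ℂ → ℂ}

theorem apply_eq_Gamma_mul (hG : SatisfiesFirstDoubleGammaEq τ G) {u v w : ℂ}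
    (huv : u = v + 1) (hwv : w = v) : G u = Complex.Gamma (w / τ) * G v := by
  subst huv hwv
  exact hG w

theorem prod_linear_mul_prod_Gamma (hG : SatisfiesFirstDoubleGammaEq τ G) {k l : ℕ}
    (hkl : k ≤ l) {x y : ℕ → ℂ} {c d : ℕ → ℝ}
    (hlow : ∀ i ∈ Icc 1 k, x i = y i + 1) (hhigh : ∀ i ∈ Icc (k + 1) l, x i = y i - 1)
    (hcd : ∀ i ∈ Icc 1 l, c i = d i) (s : ℂ) :
    (∏ i ∈ Icc 1 l, G (x i + (c i : ℂ) * s)) *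
        ∏ i ∈ Icc (k + 1) l, Complex.Gamma ((y i - 1 + (d i : ℂ) * s) / τ) =
      (∏ i ∈ Icc 1 l, G (y i + (d i : ℂ) * s)) *
        ∏ i ∈ Icc 1 k, Complex.Gamma ((x i - 1 + (c i : ℂ) * s) / τ) := by
  apply prod_Icc_mul_prod_eq_of_exchange hkl
  · intro i hi
    have hc := hcd i (Icc_subset_Icc_right hkl hi)
    rw [hlow i hi, hc]
    exact hG.apply_eq_Gamma_mul (by ring) (by ring)
  · intro i hi
    have hc := hcd i (Icc_subset_Icc_left (Nat.le_add_left 1 k) hi)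
    rw [hhigh i hi, hc]
    exact hG.apply_eq_Gamma_mul (by ring) (by ring)

theorem prod_reflected_mul_prod_Gamma (hG : SatisfiesFirstDoubleGammaEq τ G) {k l : ℕ}
    (hkl : k ≤ l) {x y : ℕ → ℂ} {c d : ℕ → ℝ}
    (hlow : ∀ i ∈ Icc 1 k, x i = y i - 1) (hhigh : ∀ i ∈ Icc (k + 1) l, x i = y i + 1)
    (hcd : ∀ i ∈ Icc 1 l, c i = d i) (s : ℂ) :
    (∏ i ∈ Icc 1 l, G (1 + τ - x i - (c i : ℂ) * s)) *
        ∏ i ∈ Icc (k + 1) l, Complex.Gamma ((τ - y i - (d i : ℂ) * s) / τ) =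
      (∏ i ∈ Icc 1 l, G (1 + τ - y i - (d i : ℂ) * s)) *
        ∏ i ∈ Icc 1 k, Complex.Gamma ((τ - x i - (c i : ℂ) * s) / τ) := by
  apply prod_Icc_mul_prod_eq_of_exchange hkl
  · intro i hi
    have hc := hcd i (Icc_subset_Icc_right hkl hi)
    rw [hlow i hi, hc]
    exact hG.apply_eq_Gamma_mul (by ring) (by ring)
  · intro i hi
    have hc := hcd i (Icc_subset_Icc_left (Nat.le_add_left 1 k) hi)
    rw [hhigh i hi, hc]
    exact hG.apply_eq_Gamma_mul (by ring) (by ring)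

end SatisfiesFirstDoubleGammaEq

theorem foxBarnes_reduces_to_foxH_general (τ : ℝ) (m n p q : ℕ)
    (hp : p = m + n) (hq : q = m + n)
    (a b : ℕ → ℂ) (α β : ℕ → ℝ)
    (hαβ : ∀ i ∈ Finset.Icc 1 n, α i = β (m + i))
    (hβα : ∀ i ∈ Finset.Icc 1 m, β i = α (n + i))
    (m₀ n₀ : ℕ) (hm₀m : m₀ ≤ m) (hn₀n : n₀ ≤ n)
    (ha1 : ∀ i ∈ Finset.Icc 1 n₀, a i = b (m + i) - 1)
    (ha2 : ∀ i ∈ Finset.Icc (n₀ + 1) n, a i = b (m + i) + 1)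
    (hb1 : ∀ i ∈ Finset.Icc 1 m₀, b i = a (n + i) + 1)
    (hb2 : ∀ i ∈ Finset.Icc (m₀ + 1) m, b i = a (n + i) - 1)
    (G : ℂ → ℂ)
    (hG : ∀ z : ℂ, G (z + 1) = Complex.Gamma (z / τ) * G z) :
    ∀ s : ℂ,
      (∏ i ∈ Finset.Icc 1 m, G (b i + ((β i : ℝ) : ℂ) * s)) *
      (∏ i ∈ Finset.Icc 1 n, G (1 + (τ : ℂ) - a i - (α i : ℂ) * s)) *
      (∏ i ∈ Finset.Icc (m₀ + 1) m,
        Complex.Gamma ((a (n + i) - 1 + (α (n + i) : ℂ) * s) / τ)) *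
      (∏ i ∈ Finset.Icc (n₀ + 1) n,
        Complex.Gamma (((τ : ℂ) - b (m + i) - (β (m + i) : ℂ) * s) / τ)) =
      (∏ i ∈ Finset.Icc (m + 1) q, G (1 + (τ : ℂ) - b i - (β i : ℂ) * s)) *
      (∏ i ∈ Finset.Icc (n + 1) p, G (a i + (α i : ℂ) * s)) *
      (∏ i ∈ Finset.Icc 1 m₀, Complex.Gamma ((b i - 1 + (β i : ℂ) * s) / τ)) *
      (∏ i ∈ Finset.Icc 1 n₀, Complex.Gamma (((τ : ℂ) - a i - (α i : ℂ) * s) / τ)) := by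
  intro s
  subst hp hq
  rw [prod_Icc_add_one_add, add_comm m n, prod_Icc_add_one_add, mul_assoc, mul_mul_mul_comm,
    SatisfiesFirstDoubleGammaEq.prod_linear_mul_prod_Gamma hG hm₀m hb1 hb2 hβα,
    SatisfiesFirstDoubleGammaEq.prod_reflected_mul_prod_Gamma hG hn₀n ha1 ha2 hαβ]
  ring

/-- Proposition 1 of the paper (cross-multiplied integrand identity): under the stated
relations among the parameters, the Mellin–Barnes integrand built from double-gamma
factors equals the corresponding integrand built from Gamma factors. -/
theorem foxBarnes_reduces_to_foxH (τ : ℝ) (hτ : 0 < τ) (m n p q : ℕ)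
    (hp : p = m + n) (hq : q = m + n)
    (a b : ℕ → ℂ) (α β : ℕ → ℝ)
    (hα : ∀ i ∈ Finset.Icc 1 p, 0 < α i)
    (hβ : ∀ i ∈ Finset.Icc 1 q, 0 < β i)
    (hαβ : ∀ i ∈ Finset.Icc 1 n, α i = β (m + i))
    (hβα : ∀ i ∈ Finset.Icc 1 m, β i = α (n + i))
    (m₀ n₀ : ℕ) (hm₀1 : 1 ≤ m₀) (hm₀m : m₀ ≤ m) (hn₀1 : 1 ≤ n₀) (hn₀n : n₀ ≤ n)
    (ha1 : ∀ i ∈ Finset.Icc 1 n₀, a i = b (m + i) - 1)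
    (ha2 : ∀ i ∈ Finset.Icc (n₀ + 1) n, a i = b (m + i) + 1)
    (hb1 : ∀ i ∈ Finset.Icc 1 m₀, b i = a (n + i) + 1)
    (hb2 : ∀ i ∈ Finset.Icc (m₀ + 1) m, b i = a (n + i) - 1)
    (G : ℂ → ℂ)
    (hG : ∀ z : ℂ, G (z + 1) = Complex.Gamma (z / τ) * G z) :
    ∀ s : ℂ,
      (∏ i ∈ Finset.Icc 1 m, G (b i + ((β i : ℝ) : ℂ) * s)) *
      (∏ i ∈ Finset.Icc 1 n, G (1 + (τ : ℂ) - a i - (α i : ℂ) * s)) *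
      (∏ i ∈ Finset.Icc (m₀ + 1) m,
        Complex.Gamma ((a (n + i) - 1 + (α (n + i) : ℂ) * s) / τ)) *
      (∏ i ∈ Finset.Icc (n₀ + 1) n,
        Complex.Gamma (((τ : ℂ) - b (m + i) - (β (m + i) : ℂ) * s) / τ)) =
      (∏ i ∈ Finset.Icc (m + 1) q, G (1 + (τ : ℂ) - b i - (β i : ℂ) * s)) *
      (∏ i ∈ Finset.Icc (n + 1) p, G (a i + (α i : ℂ) * s)) *
      (∏ i ∈ Finset.Icc 1 m₀, Complex.Gamma ((b i - 1 + (β i : ℂ) * s) / τ)) *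
      (∏ i ∈ Finset.Icc 1 n₀, Complex.Gamma (((τ : ℂ) - a i - (α i : ℂ) * s) / τ)) :=
  foxBarnes_reduces_to_foxH_general τ m n p q hp hq a b α β hαβ hβα m₀ n₀ hm₀m hn₀n ha1 ha2 hb1 hb2
    G hG
end

section
/- Let a, m > 0 and l > −1/a be real numbers, set τ = 1/(a·m) and φ = (1 + a·l)·τ, and let G : ℂ → ℂ satisfy the first double-gamma functional equation with parameter τ. Then for every natural number n, cₙ · G(φ) · G(φ + a·τ + n) = G(φ + a·τ) · G(φ + n), where cₙ are the Kilbas–Saigo coefficients (c₀ = 1, cₙ = ∏_{k=0}^{n−1} Γ(1 + a(km + l))/Γ(1 + a(km + l + 1)) for n ≥ 1). -/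
/-! Iterating `G (z + 1) = Γ (z / τ) G z` gives `G (z + n) = (∏ k < n, Γ ((z + k) / τ)) G z`.
For `z = φ` and `z = φ + aτ` the arguments `(z + k) / τ` are exactly `1 + a(km + l)` and
`1 + a(km + l + 1)`, so `cₙ` is the quotient of the two products; the denominators are Gamma
values at positive reals, hence nonzero. -/

open Finset

section ShiftEquation

variable {α M : Type*} [AddMonoidWithOne α]

theorem apply_add_natCast_eq_prod_mul [CommMonoid M] {f G : α → M}
    (hG : ∀ z, G (z + 1) = f z * G z) (z : α) (n : ℕ) :
    G (z + n) = (∏ k ∈ range n, f (z + k)) * G z := by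
  induction n with
  | zero => simp
  | succ n ih =>
    rw [Nat.cast_succ, ← add_assoc, hG, ih, prod_range_succ, mul_left_comm, ← mul_assoc]

theorem prod_div_mul_apply_mul_apply_add_natCast [Field M] {f G : α → M}
    (hG : ∀ z, G (z + 1) = f z * G z) (z w : α) (n : ℕ) (hf : ∀ k < n, f (w + k) ≠ 0) :
    (∏ k ∈ range n, f (z + k) / f (w + k)) * G z * G (w + n) = G w * G (z + n) := by
  have hprod : ∏ k ∈ range n, f (w + k) ≠ 0 :=
    prod_ne_zero_iff.mpr fun k hk => hf k (mem_range.mp hk)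
  rw [apply_add_natCast_eq_prod_mul hG, apply_add_natCast_eq_prod_mul hG, prod_div_distrib]
  field_simp

end ShiftEquation

theorem kilbasSaigo_shift_div {a m : ℝ} (ha : a ≠ 0) (hm : m ≠ 0) (l : ℝ) (k : ℕ) :
    ((1 + a * l) * (1 / (a * m)) + k) / (1 / (a * m)) = 1 + a * (k * m + l) := by
  field_simp
  ring

/-- Key step of Proposition 6 of the paper: the Kilbas–Saigo coefficients expressed in
terms of double gamma values, `cₙ G(φ) G(φ+aτ+n) = G(φ+aτ) G(φ+n)`. -/
theorem kilbasSaigo_coeff_double_gamma (a m l : ℝ) (ha : 0 < a) (hm : 0 < m)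
    (hl : -1 / a < l) (τ φ : ℝ) (hτdef : τ = 1 / (a * m)) (hφdef : φ = (1 + a * l) * τ)
    (G : ℂ → ℂ)
    (hG : ∀ z : ℂ, G (z + 1) = Complex.Gamma (z / τ) * G z)
    (c : ℕ → ℂ)
    (hc : ∀ n : ℕ, c n = ∏ k ∈ Finset.range n,
      Complex.Gamma ((1 + a * (k * m + l) : ℝ)) /
        Complex.Gamma ((1 + a * (k * m + l + 1) : ℝ))) :
    ∀ n : ℕ,
      c n * G (φ : ℂ) * G ((φ : ℂ) + (a : ℂ) * (τ : ℂ) + (n : ℂ))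
        = G ((φ : ℂ) + (a : ℂ) * (τ : ℂ)) * G ((φ : ℂ) + (n : ℂ)) := by
  intro n
  have hal : 0 < 1 + a * l := by nlinarith [(div_lt_iff₀ ha).mp hl]
  have hφ' : (φ : ℂ) + a * τ = ((1 + a * (l + 1)) * τ : ℝ) := by
    rw [hφdef]
    push_cast
    ring
  have harg (l' : ℝ) (k : ℕ) :
      (((1 + a * l') * τ : ℝ) + k : ℂ) / τ = (1 + a * (k * m + l') : ℝ) := by
    rw [← kilbasSaigo_shift_div ha.ne' hm.ne' l' k, hτdef]
    push_cast
    rfl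
  have hc' : c n = ∏ k ∈ range n,
      Complex.Gamma ((φ + k) / τ) / Complex.Gamma ((φ + a * τ + k) / τ) := by
    rw [hc, hφ', hφdef]
    simp only [harg, add_assoc]
  rw [hc']
  refine prod_div_mul_apply_mul_apply_add_natCast hG _ _ n fun k _ => ?_
  rw [hφ', harg]
  have hkm : 0 ≤ (k : ℝ) * m := by positivity
  exact Complex.Gamma_ne_zero_of_re_pos (by rw [Complex.ofReal_re]; nlinarith)
end

section
/- Let a, m > 0 and l > −1/a be real numbers and let cₙ be the Kilbas–Saigo coefficients: c₀ = 1 and cₙ = ∏_{k=0}^{n−1} Γ(1 + a(km + l))/Γ(1 + a(km + l + 1)) for n ≥ 1. Then for every z ∈ ℂ the series Σ_{n=0}^∞ cₙ zⁿ converges absolutely; i.e., the Kilbas–Saigo function E_{a,m,l}(z) = Σ_{n=0}^∞ cₙ zⁿ is defined (and entire) on all of ℂ. -/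
/-!
Log-convexity of `Γ` at `x - 1 < x < x + a`, combined with `Γ x = (x - 1) Γ (x - 1)`, gives
`Γ x / Γ (x + a) ≤ (x - 1) ^ (-a)`. The successive ratios `c (n + 1) / c n` are such Gamma
quotients at points `1 + a (n m + l) → ∞`, so they tend to `0` and the ratio test applies for
every `z`.
-/

open Real Filter Topology Finset

namespace Real

theorem log_Gamma_sub_log_Gamma_add_le {a x : ℝ} (ha : 0 ≤ a) (hx : 1 < x) :
    log (Gamma x) - log (Gamma (x + a)) ≤ -a * log (x - 1) := by
  have hx1 : 0 < x - 1 := by linarith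
  have ha1 : 0 < 1 + a := by linarith
  have hconv := convexOn_log_Gamma.2 (Set.mem_Ioi.2 (by linarith : 0 < x + a))
    (Set.mem_Ioi.2 hx1) (by positivity : 0 ≤ 1 / (1 + a)) (by positivity : 0 ≤ a / (1 + a))
    (by field_simp)
  have hmid : 1 / (1 + a) * (x + a) + a / (1 + a) * (x - 1) = x := by field_simp; ring
  simp only [smul_eq_mul, Function.comp_apply, hmid] at hconv
  have hconv_cleared : (1 + a) * log (Gamma x) ≤ log (Gamma (x + a)) + a * log (Gamma (x - 1)) := by
    have := mul_le_mul_of_nonneg_left hconv ha1.le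
    rwa [mul_add, ← mul_assoc, ← mul_assoc, mul_one_div_cancel ha1.ne',
      mul_div_cancel₀ _ ha1.ne', one_mul] at this
  have hshift : log (Gamma x) = log (Gamma (x - 1)) + log (x - 1) := by
    rw [← log_mul (Gamma_pos_of_pos hx1).ne' hx1.ne', mul_comm,
      ← Gamma_add_one hx1.ne', sub_add_cancel]
  linear_combination hconv_cleared - a * hshift

theorem Gamma_div_Gamma_add_le_rpow {a x : ℝ} (ha : 0 ≤ a) (hx : 1 < x) :
    Gamma x / Gamma (x + a) ≤ (x - 1) ^ (-a) := by
  rw [← exp_log (Gamma_pos_of_pos (by linarith : 0 < x)),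
    ← exp_log (Gamma_pos_of_pos (by linarith : 0 < x + a)), ← exp_sub,
    rpow_def_of_pos (by linarith), mul_comm]
  exact exp_le_exp.2 (log_Gamma_sub_log_Gamma_add_le ha hx)

theorem tendsto_Gamma_div_Gamma_add_atTop {a : ℝ} (ha : 0 < a) :
    Tendsto (fun x => Gamma x / Gamma (x + a)) atTop (𝓝 0) := by
  have hbound : Tendsto (fun x : ℝ => (x - 1) ^ (-a)) atTop (𝓝 0) :=
    (tendsto_rpow_neg_atTop ha).comp (tendsto_atTop_add_const_right _ (-1) tendsto_id)
  refine squeeze_zero' ?_ ?_ hbound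
  · filter_upwards [eventually_gt_atTop 0] with x hx
    exact div_nonneg (Gamma_pos_of_pos hx).le (Gamma_pos_of_pos (by linarith)).le
  · filter_upwards [eventually_gt_atTop 1] with x hx
    exact Gamma_div_Gamma_add_le_rpow ha.le hx

end Real

theorem summable_norm_prod_mul_pow {𝕜 : Type*} [NormedField 𝕜] {r : ℕ → 𝕜}
    (hr : Tendsto r atTop (𝓝 0)) (z : 𝕜) :
    Summable fun n => ‖(∏ k ∈ range n, r k) * z ^ n‖ := by
  have hrz : ∀ᶠ n in atTop, ‖r n * z‖ ≤ 1 / 2 := by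
    have := (hr.mul_const z).norm
    rw [zero_mul, norm_zero] at this
    exact this.eventually_le_const (by norm_num)
  refine summable_of_ratio_norm_eventually_le (by norm_num : (1 / 2 : ℝ) < 1) ?_
  filter_upwards [hrz] with n hn
  have hstep : (∏ k ∈ range (n + 1), r k) * z ^ (n + 1)
      = r n * z * ((∏ k ∈ range n, r k) * z ^ n) := by
    rw [prod_range_succ, pow_succ]; ring
  rw [norm_norm, norm_norm, hstep, norm_mul]
  exact mul_le_mul_of_nonneg_right hn (norm_nonneg _)

theorem kilbasSaigo_summable_general (a m l : ℝ) (ha : 0 < a) (hm : 0 < m)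
    (c : ℕ → ℝ)
    (hc : ∀ n : ℕ, c n = ∏ k ∈ Finset.range n,
      Real.Gamma (1 + a * (k * m + l)) / Real.Gamma (1 + a * (k * m + l + 1))) :
    ∀ z : ℂ, Summable (fun n : ℕ => ‖(c n : ℂ) * z ^ n‖) := by
  intro z
  have harg : Tendsto (fun k : ℕ => 1 + a * (k * m + l)) atTop atTop :=
    tendsto_atTop_add_const_left _ _ <| Tendsto.const_mul_atTop ha <|
      tendsto_atTop_add_const_right _ l <| tendsto_natCast_atTop_atTop.atTop_mul_const hm
  have hratio : Tendsto (fun k : ℕ => ((Gamma (1 + a * (k * m + l)) /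
      Gamma (1 + a * (k * m + l + 1)) : ℝ) : ℂ)) atTop (𝓝 0) := by
    have := (Complex.continuous_ofReal.tendsto 0).comp
      ((tendsto_Gamma_div_Gamma_add_atTop ha).comp harg)
    rw [Complex.ofReal_zero] at this
    refine this.congr fun k => ?_
    simp only [Function.comp_apply]
    congr 3
    ring
  simpa only [hc, Complex.ofReal_prod] using summable_norm_prod_mul_pow hratio z

/-- The Kilbas–Saigo series `Σ cₙ zⁿ` converges absolutely for every `z ∈ ℂ`,
i.e. the Kilbas–Saigo function is defined (and entire) on all of `ℂ`. -/
theorem kilbasSaigo_summable (a m l : ℝ) (ha : 0 < a) (hm : 0 < m) (hl : -1 / a < l)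
    (c : ℕ → ℝ)
    (hc : ∀ n : ℕ, c n = ∏ k ∈ Finset.range n,
      Real.Gamma (1 + a * (k * m + l)) / Real.Gamma (1 + a * (k * m + l + 1))) :
    ∀ z : ℂ, Summable (fun n : ℕ => ‖(c n : ℂ) * z ^ n‖) :=
  kilbasSaigo_summable_general a m l ha hm c hc
end

section
/- Let a, m > 0, l > −1/a and 0 < ν < a be real numbers, and let cₙ be the Kilbas–Saigo coefficients: c₀ = 1 and cₙ = ∏_{k=0}^{n−1} Γ(1 + a(km + l))/Γ(1 + a(km + l + 1)) for n ≥ 1. Then for every w ∈ ℂ the series Σ_{n=0}^∞ cₙ · Γ(1 + nν) · wⁿ converges absolutely (i.e., the power series Σ cₙ Γ(1 + nν) wⁿ has infinite radius of convergence). -/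
/-!
Ratio test. Log-convexity of `Γ` (comparing slopes of `log ∘ Γ` against the unit steps, where
they equal `log x`) gives `Γ(x + s) ≤ Γ(x) (x + s)^s` and `Γ(x + 1) x^s ≤ Γ(x + 1 + s)`. Hence
the ratio of consecutive terms is at most `‖w‖ (1 + (n + 1)ν)^ν / (a(nm + l))^a`, which is of
order `n^(ν - a) → 0`.
-/

open Real Filter Topology

namespace Real

theorem log_Gamma_add_one {x : ℝ} (hx : 0 < x) : log (Gamma (x + 1)) = log x + log (Gamma x) := by
  rw [Gamma_add_one hx.ne', log_mul hx.ne' (Gamma_pos_of_pos hx).ne']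

theorem Gamma_add_le_Gamma_mul_rpow {x s : ℝ} (hx : 0 < x) (hs : 0 < s) :
    Gamma (x + s) ≤ Gamma x * (x + s) ^ s := by
  have hxs : 0 < x + s := by linarith
  have hslope := convexOn_log_Gamma.slope_mono_adjacent (x := x) (y := x + s) (z := x + s + 1)
    hx (by simp only [Set.mem_Ioi]; linarith) (by linarith) (by linarith)
  simp only [Function.comp_apply, add_sub_cancel_left, div_one, log_Gamma_add_one hxs,
    div_le_iff₀ hs] at hslope
  rw [← log_le_log_iff (Gamma_pos_of_pos hxs) (by positivity),
    log_mul (Gamma_pos_of_pos hx).ne' (by positivity), log_rpow hxs]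
  linarith

theorem Gamma_add_one_mul_rpow_le {x s : ℝ} (hx : 0 < x) (hs : 0 < s) :
    Gamma (x + 1) * x ^ s ≤ Gamma (x + 1 + s) := by
  have hslope := convexOn_log_Gamma.slope_mono_adjacent (x := x) (y := x + 1) (z := x + 1 + s)
    hx (by simp only [Set.mem_Ioi]; linarith) (by linarith) (by linarith)
  simp only [Function.comp_apply, add_sub_cancel_left, div_one, log_Gamma_add_one hx,
    le_div_iff₀ hs] at hslope
  rw [← log_le_log_iff (by positivity) (Gamma_pos_of_pos (by positivity)),
    log_mul (Gamma_pos_of_pos (by positivity)).ne' (by positivity), log_rpow hx,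
    log_Gamma_add_one hx]
  linarith

end Real

theorem tendsto_affine_rpow_div_affine_rpow {p q b d s t : ℝ} (hp : 0 < p) (hq : 0 < q)
    (hst : s < t) :
    Tendsto (fun x : ℝ => (p * x + b) ^ s / (q * x + d) ^ t) atTop (𝓝 0) := by
  have hquot {p b : ℝ} : Tendsto (fun x : ℝ => p + b / x) atTop (𝓝 p) := by
    simpa using tendsto_const_nhds.add (tendsto_const_nhds (x := b).div_atTop tendsto_id)
  have hlim := (tendsto_rpow_neg_atTop (sub_pos.2 hst)).mul
    (((hquot (p := p) (b := b)).rpow_const (p := s) (.inl hp.ne')).div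
      ((hquot (p := q) (b := d)).rpow_const (p := t) (.inl hq.ne')) (by positivity))
  rw [zero_mul] at hlim
  refine hlim.congr' ?_
  filter_upwards [eventually_gt_atTop 0, (hquot (p := p) (b := b)).eventually (lt_mem_nhds hp),
    (hquot (p := q) (b := d)).eventually (lt_mem_nhds hq)] with x hx hpb hqd
  have factor {p b : ℝ} : p * x + b = x * (p + b / x) := by field_simp
  simp only [Pi.div_apply]
  rw [factor (p := p), factor (p := q), mul_rpow hx.le hpb.le, mul_rpow hx.le hqd.le, neg_sub,
    rpow_sub hx]
  field_simp

noncomputable def kilbasSaigoCoeff (a m l : ℝ) (n : ℕ) : ℝ :=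
  ∏ k ∈ Finset.range n, Gamma (1 + a * (k * m + l)) / Gamma (1 + a * (k * m + l + 1))

section KilbasSaigo

variable {a m l : ℝ}

theorem kilbasSaigoCoeff_pos (ha : 0 ≤ a) (hm : 0 ≤ m) (hl : -1 < a * l) (n : ℕ) :
    0 < kilbasSaigoCoeff a m l n :=
  Finset.prod_pos fun k _ =>
    have hk : 0 ≤ a * (k * m) := by positivity
    div_pos (Gamma_pos_of_pos (by linarith [mul_add a (k * m) l]))
      (Gamma_pos_of_pos (by linarith [mul_add a (k * m + l) 1, mul_add a (k * m) l]))

theorem kilbasSaigoCoeff_succ_le (ha : 0 < a) (hm : 0 ≤ m) (hl : -1 < a * l) {n : ℕ}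
    (hn : 0 < a * (n * m + l)) :
    kilbasSaigoCoeff a m l (n + 1) ≤ kilbasSaigoCoeff a m l n / (a * (n * m + l)) ^ a := by
  have hG := Gamma_add_one_mul_rpow_le hn ha
  rw [add_comm _ (1 : ℝ), show 1 + a * (n * m + l) + a = 1 + a * (n * m + l + 1) by ring] at hG
  rw [kilbasSaigoCoeff, Finset.prod_range_succ, ← kilbasSaigoCoeff,
    div_eq_mul_inv (kilbasSaigoCoeff a m l n)]
  refine mul_le_mul_of_nonneg_left ?_ (kilbasSaigoCoeff_pos ha.le hm hl n).le
  rw [div_le_iff₀ (Gamma_pos_of_pos (by linarith [mul_add a (n * m + l) 1])), inv_mul_eq_div,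
    le_div_iff₀ (by positivity)]
  exact hG

theorem kilbasSaigoCoeff_mul_Gamma_mul_pow_succ_le {ν r : ℝ} (ha : 0 < a) (hm : 0 ≤ m)
    (hl : -1 < a * l) (hν : 0 < ν) (hr : 0 ≤ r) {n : ℕ} (hn : 0 < a * (n * m + l)) :
    kilbasSaigoCoeff a m l (n + 1) * Gamma (1 + (n + 1) * ν) * r ^ (n + 1) ≤
      r * ((1 + (n + 1) * ν) ^ ν / (a * (n * m + l)) ^ a) *
        (kilbasSaigoCoeff a m l n * Gamma (1 + n * ν) * r ^ n) := by
  have hΓ := Gamma_add_le_Gamma_mul_rpow (x := 1 + n * ν) (by positivity) hν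
  rw [show 1 + n * ν + ν = 1 + (n + 1) * ν by ring] at hΓ
  calc kilbasSaigoCoeff a m l (n + 1) * Gamma (1 + (n + 1) * ν) * r ^ (n + 1)
      ≤ kilbasSaigoCoeff a m l n / (a * (n * m + l)) ^ a *
          (Gamma (1 + n * ν) * (1 + (n + 1) * ν) ^ ν) * r ^ (n + 1) :=
        mul_le_mul_of_nonneg_right
          (mul_le_mul (kilbasSaigoCoeff_succ_le ha hm hl hn) hΓ
            (Gamma_pos_of_pos (by positivity)).le
            (div_nonneg (kilbasSaigoCoeff_pos ha.le hm hl n).le (by positivity)))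
          (by positivity)
    _ = _ := by ring

end KilbasSaigo

/-- Convergence half of the paper's claim about the term-by-term Laplace transform
series of the Kilbas–Saigo function: for `0 < ν < a`, the power series
`Σ cₙ Γ(1 + nν) wⁿ` converges absolutely for every `w ∈ ℂ`. -/
theorem kilbasSaigo_laplace_series_summable (a m l ν : ℝ) (ha : 0 < a) (hm : 0 < m)
    (hl : -1 / a < l) (hν0 : 0 < ν) (hνa : ν < a)
    (c : ℕ → ℝ)
    (hc : ∀ n : ℕ, c n = ∏ k ∈ Finset.range n,
      Real.Gamma (1 + a * (k * m + l)) / Real.Gamma (1 + a * (k * m + l + 1))) :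
    ∀ w : ℂ, Summable (fun n : ℕ => ‖((c n * Real.Gamma (1 + n * ν) : ℝ) : ℂ) * w ^ n‖) := by
  intro w
  obtain rfl : c = kilbasSaigoCoeff a m l := funext hc
  have hal : -1 < a * l := by rwa [div_lt_iff₀' ha] at hl
  have hterm (k : ℕ) : 0 < kilbasSaigoCoeff a m l k * Gamma (1 + k * ν) :=
    mul_pos (kilbasSaigoCoeff_pos ha.le hm.le hal k) (Gamma_pos_of_pos (by positivity))
  have hnorm (k : ℕ) : ‖‖((kilbasSaigoCoeff a m l k * Gamma (1 + k * ν) : ℝ) : ℂ) * w ^ k‖‖ =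
      kilbasSaigoCoeff a m l k * Gamma (1 + k * ν) * ‖w‖ ^ k := by
    rw [norm_norm, norm_mul, norm_pow, Complex.norm_real, norm_of_nonneg (hterm k).le]
  have hx : Tendsto (fun n : ℕ => a * (n * m + l)) atTop atTop :=
    ((tendsto_natCast_atTop_atTop.atTop_mul_const hm).atTop_add
      tendsto_const_nhds).const_mul_atTop ha
  have hρ : Tendsto (fun n : ℕ => ‖w‖ * ((1 + (n + 1) * ν) ^ ν / (a * (n * m + l)) ^ a))
      atTop (𝓝 0) := by
    have h := ((tendsto_affine_rpow_div_affine_rpow (b := 1 + ν) (d := a * l) hν0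
      (mul_pos ha hm) hνa).comp tendsto_natCast_atTop_atTop).const_mul ‖w‖
    rw [mul_zero] at h
    exact h.congr fun n => by simp only [Function.comp_apply]; ring_nf
  refine summable_of_ratio_norm_eventually_le (r := 1 / 2) (by norm_num) ?_
  filter_upwards [hx.eventually_gt_atTop 0,
    hρ.eventually (ge_mem_nhds (by norm_num : (0 : ℝ) < 1 / 2))] with n hn hρn
  rw [hnorm, hnorm, Nat.cast_succ]
  exact (kilbasSaigoCoeff_mul_Gamma_mul_pow_succ_le ha hm.le hal hν0 (norm_nonneg w) hn).trans
    (mul_le_mul_of_nonneg_right hρn (mul_nonneg (hterm n).le (by positivity)))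
end

section
/- Let a, m > 0, l > −1/a and ν > a be real numbers, and let cₙ be the Kilbas–Saigo coefficients: c₀ = 1 and cₙ = ∏_{k=0}^{n−1} Γ(1 + a(km + l))/Γ(1 + a(km + l + 1)) for n ≥ 1. Then for every real w ≠ 0 the sequence cₙ · Γ(1 + nν) · |w|ⁿ tends to ∞ as n → ∞; in particular the power series Σ_{n=0}^∞ cₙ Γ(1 + nν) wⁿ has radius of convergence 0. -/
/-!
Since `log ∘ Γ` is convex with `log Γ(x + 1) - log Γ(x) = log x`, comparing its slopes over
adjacent intervals gives `x ^ s ≤ Γ(x + 1 + s) / Γ(x + 1)` and `Γ(x + s) / Γ(x) ≤ (x + s) ^ s`.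
The ratio of consecutive terms, `Γ(y) / Γ(y + a) · Γ(x + ν) / Γ(x) · |w|` with `y` and `x` affine
in `n`, is therefore at least a constant times `n ^ (ν - a)`, which tends to infinity as `ν > a`.
-/

open Real Filter Set

namespace Real

variable {x s : ℝ}

theorem log_Gamma_add_one_sub_log_Gamma (hx : 0 < x) :
    log (Gamma (x + 1)) - log (Gamma x) = log x := by
  rw [Gamma_add_one hx.ne', log_mul hx.ne' (Gamma_pos_of_pos hx).ne', add_sub_cancel_right]

theorem Gamma_div_Gamma_eq_exp {y : ℝ} (hx : 0 < x) (hy : 0 < y) :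
    Gamma y / Gamma x = exp (log (Gamma y) - log (Gamma x)) := by
  rw [exp_sub, exp_log (Gamma_pos_of_pos hy), exp_log (Gamma_pos_of_pos hx)]

theorem Gamma_add_div_Gamma_le_rpow (hx : 0 < x) (hs : 0 < s) :
    Gamma (x + s) / Gamma x ≤ (x + s) ^ s := by
  have hxs : 0 < x + s := by positivity
  have slope := convexOn_log_Gamma.slope_mono_adjacent (mem_Ioi.2 hx)
    (mem_Ioi.2 (by positivity : 0 < x + s + 1)) (lt_add_of_pos_right x hs) (lt_add_one (x + s))
  simp only [Function.comp_apply, add_sub_cancel_left, div_one,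
    log_Gamma_add_one_sub_log_Gamma hxs, div_le_iff₀ hs] at slope
  rw [Gamma_div_Gamma_eq_exp hx hxs, rpow_def_of_pos hxs]
  exact exp_le_exp.2 slope

theorem rpow_le_Gamma_add_div_Gamma (hx : 0 < x) (hs : 0 < s) :
    x ^ s ≤ Gamma (x + 1 + s) / Gamma (x + 1) := by
  have slope := convexOn_log_Gamma.slope_mono_adjacent (mem_Ioi.2 hx)
    (mem_Ioi.2 (by positivity : 0 < x + 1 + s)) (lt_add_one x) (lt_add_of_pos_right (x + 1) hs)
  simp only [Function.comp_apply, add_sub_cancel_left, div_one,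
    log_Gamma_add_one_sub_log_Gamma hx, le_div_iff₀ hs] at slope
  rw [Gamma_div_Gamma_eq_exp (by positivity) (by positivity), rpow_def_of_pos hx]
  exact exp_le_exp.2 slope

theorem tendsto_Gamma_div_mul_Gamma_div_atTop {α β a ν : ℝ} (hα : 0 < α) (hβ : 0 < β)
    (ha : 0 < a) (haν : a < ν) :
    Tendsto (fun n : ℕ => Gamma (α * n + β) / Gamma (α * n + β + a) *
      (Gamma (1 + n * ν + ν) / Gamma (1 + n * ν))) atTop atTop := by
  have hν : 0 < ν := ha.trans haν
  have hK : 0 < α + β + a := by positivity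
  refine tendsto_atTop_mono' _ ?_ <|
    Tendsto.const_mul_atTop (by positivity : 0 < (α + β + a) ^ (-a) * ν ^ ν) <|
      (tendsto_rpow_atTop (sub_pos.2 haν)).comp tendsto_natCast_atTop_atTop
  filter_upwards [eventually_ge_atTop 1] with n hn
  have hn : (1 : ℝ) ≤ n := by exact_mod_cast hn
  have hy : 0 < α * n + β := by positivity
  have ratio_a : ((α + β + a) * n) ^ (-a) ≤ Gamma (α * n + β) / Gamma (α * n + β + a) :=
    calc ((α + β + a) * n) ^ (-a) ≤ (α * n + β + a) ^ (-a) :=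
          rpow_le_rpow_of_nonpos (by positivity) (by nlinarith) (neg_nonpos.2 ha.le)
      _ = ((α * n + β + a) ^ a)⁻¹ := rpow_neg (by positivity) a
      _ ≤ (Gamma (α * n + β + a) / Gamma (α * n + β))⁻¹ :=
          inv_anti₀ (div_pos (Gamma_pos_of_pos (by positivity)) (Gamma_pos_of_pos hy))
            (Gamma_add_div_Gamma_le_rpow hy ha)
      _ = Gamma (α * n + β) / Gamma (α * n + β + a) := inv_div _ _
  have ratio_ν : (n * ν) ^ ν ≤ Gamma (1 + n * ν + ν) / Gamma (1 + n * ν) := by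
    rw [add_comm 1]
    exact rpow_le_Gamma_add_div_Gamma (by positivity) hν
  calc (α + β + a) ^ (-a) * ν ^ ν * (n : ℝ) ^ (ν - a)
      = ((α + β + a) * n) ^ (-a) * (n * ν) ^ ν := by
        rw [mul_rpow hK.le (by positivity), mul_rpow (by positivity) hν.le, sub_eq_add_neg,
          rpow_add (by positivity)]
        ring
    _ ≤ _ := mul_le_mul ratio_a ratio_ν (by positivity)
        (div_pos (Gamma_pos_of_pos hy) (Gamma_pos_of_pos (by positivity))).le

end Real

theorem tendsto_atTop_of_tendsto_succ_div_atTop {t : ℕ → ℝ} (ht : ∀ n, 0 < t n)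
    (h : Tendsto (fun n => t (n + 1) / t n) atTop atTop) : Tendsto t atTop atTop := by
  obtain ⟨N, hN⟩ := eventually_atTop.1 (h.eventually_ge_atTop 2)
  refine (tendsto_add_atTop_iff_nat N).1 <|
    tendsto_atTop_of_geom_le (c := 2) (by simpa using ht N) one_lt_two fun k => ?_
  have := hN (k + N) (Nat.le_add_left N k)
  rw [le_div_iff₀ (ht _)] at this
  simpa [Nat.add_right_comm, mul_comm] using this

/-- Divergence half of the paper's claim about the term-by-term Laplace transform
series of the Kilbas–Saigo function: for `ν > a`, the terms `cₙ Γ(1 + nν) |w|ⁿ`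
tend to infinity for every real `w ≠ 0`. -/
theorem kilbasSaigo_laplace_series_divergent (a m l ν : ℝ) (ha : 0 < a) (hm : 0 < m)
    (hl : -1 / a < l) (hνa : a < ν)
    (c : ℕ → ℝ)
    (hc : ∀ n : ℕ, c n = ∏ k ∈ Finset.range n,
      Real.Gamma (1 + a * (k * m + l)) / Real.Gamma (1 + a * (k * m + l + 1))) :
    ∀ w : ℝ, w ≠ 0 →
      Filter.Tendsto (fun n : ℕ => c n * Real.Gamma (1 + n * ν) * |w| ^ n)
        Filter.atTop Filter.atTop := by
  intro w hw
  have hν : 0 < ν := ha.trans hνa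
  have hβ : 0 < 1 + a * l := by
    have := mul_lt_mul_of_pos_left hl ha
    rw [mul_div_cancel₀ _ ha.ne'] at this
    linarith
  have hc_succ (n : ℕ) : c (n + 1) = c n *
      (Gamma (a * m * n + (1 + a * l)) / Gamma (a * m * n + (1 + a * l) + a)) := by
    rw [hc, hc, Finset.prod_range_succ, show 1 + a * (n * m + l) = a * m * n + (1 + a * l) by ring,
      show 1 + a * (n * m + l + 1) = a * m * n + (1 + a * l) + a by ring]
  have hc_pos (n : ℕ) : 0 < c n := by
    induction n with
    | zero => simp [hc]
    | succ n ih =>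
      have := Gamma_pos_of_pos (by positivity : 0 < a * m * n + (1 + a * l))
      have := Gamma_pos_of_pos (by positivity : 0 < a * m * n + (1 + a * l) + a)
      rw [hc_succ]
      positivity
  have hΓ_pos (n : ℕ) : 0 < Gamma (1 + n * ν) := Gamma_pos_of_pos (by positivity)
  refine tendsto_atTop_of_tendsto_succ_div_atTop
    (fun n => by have := hΓ_pos n; have := hc_pos n; positivity) ?_
  refine ((tendsto_Gamma_div_mul_Gamma_div_atTop (mul_pos ha hm) hβ ha hνa).atTop_mul_const
    (abs_pos.2 hw)).congr fun n => ?_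
  have := hΓ_pos n
  have := hc_pos n
  rw [hc_succ, pow_succ, Nat.cast_succ, show 1 + (n + 1) * ν = 1 + n * ν + ν by ring]
  field_simp
end
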